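/- arXiv:1711.10127 — 6 statements merged into one kernel-verified Lean document; each statement's English description precedes it below -/
import Mathlib

section
/- Let d, M_β, M_β̄ ≥ 1, let Ψ_β ∈ ℝ^{d×M_β} and Ψ_β̄ ∈ ℝ^{d×M_β̄} be matrices, and let B ∈ ℝ^{M_β×M_β} and B̄ ∈ ℝ^{M_β̄×M_β̄} be symmetric positive definite. Put Σ = (I + Ψ_β B Ψ_βᵀ)⁻¹, Σ̄ = (I + Ψ_β̄ B̄ Ψ_β̄ᵀ)⁻¹, and R = (B⁻¹ + K_β)⁻¹. Then tr(Σ̄⁻¹ Σ) − d = tr(K_β̄ B̄) − tr( R (K_β + K_{β,β̄} B̄ K_{β̄,β}) ). -/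
open Matrix

/-- trace identity for the KL divergence between two
subspace-parametrized Gaussian measures. -/
theorem stmt_3 (d Mβ Mγ : ℕ) (hd : 1 ≤ d) (hMβ : 1 ≤ Mβ) (hMγ : 1 ≤ Mγ)
    (Ψβ : Matrix (Fin d) (Fin Mβ) ℝ) (Ψγ : Matrix (Fin d) (Fin Mγ) ℝ)
    (B : Matrix (Fin Mβ) (Fin Mβ) ℝ) (B' : Matrix (Fin Mγ) (Fin Mγ) ℝ)
    (hB : B.PosDef) (hB' : B'.PosDef) :
    ((1 + Ψγ * B' * Ψγᵀ) * (1 + Ψβ * B * Ψβᵀ)⁻¹).trace - (d : ℝ) =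
      ((Ψγᵀ * Ψγ) * B').trace -
        ((B⁻¹ + Ψβᵀ * Ψβ)⁻¹ *
          (Ψβᵀ * Ψβ + (Ψβᵀ * Ψγ) * B' * (Ψγᵀ * Ψβ))).trace := by
  have hK : (Ψβᵀ * Ψβ).PosSemidef := by
    simpa using Matrix.posSemidef_conjTranspose_mul_self Ψβ
  have hR : (B⁻¹ + Ψβᵀ * Ψβ).PosDef := hB.inv.add_posSemidef hK
  have hwood : (1 + Ψβ * B * Ψβᵀ)⁻¹ =
      1 - Ψβ * (B⁻¹ + Ψβᵀ * Ψβ)⁻¹ * Ψβᵀ := by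
    have := Matrix.add_mul_mul_inv_eq_sub (1 : Matrix (Fin d) (Fin d) ℝ) Ψβ B Ψβᵀ
      isUnit_one hB.isUnit (by simpa using hR.isUnit)
    simpa using this
  set R := (B⁻¹ + Ψβᵀ * Ψβ)⁻¹ with hRdef
  rw [hwood]
  have expand : (1 + Ψγ * B' * Ψγᵀ) * (1 - Ψβ * R * Ψβᵀ) =
      1 - Ψβ * R * Ψβᵀ + Ψγ * B' * Ψγᵀ - Ψγ * B' * Ψγᵀ * (Ψβ * R * Ψβᵀ) := by
    rw [add_mul, one_mul, mul_sub, mul_one]; abel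
  rw [expand]
  have t1 : (Ψβ * R * Ψβᵀ).trace = (R * (Ψβᵀ * Ψβ)).trace := by
    rw [Matrix.trace_mul_comm, ← Matrix.mul_assoc, Matrix.trace_mul_comm]
  have t2 : (Ψγ * B' * Ψγᵀ).trace = ((Ψγᵀ * Ψγ) * B').trace := by
    rw [Matrix.trace_mul_comm, Matrix.mul_assoc]
  have t3 : (Ψγ * B' * Ψγᵀ * (Ψβ * R * Ψβᵀ)).trace
      = (R * ((Ψβᵀ * Ψγ) * B' * (Ψγᵀ * Ψβ))).trace := by
    rw [show Ψγ * B' * Ψγᵀ * (Ψβ * R * Ψβᵀ) = (Ψγ * B' * Ψγᵀ * Ψβ * R) * Ψβᵀ by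
      simp only [Matrix.mul_assoc], Matrix.trace_mul_comm,
      show Ψβᵀ * (Ψγ * B' * Ψγᵀ * Ψβ * R) = (Ψβᵀ * Ψγ * B' * (Ψγᵀ * Ψβ)) * R by
      simp only [Matrix.mul_assoc], Matrix.trace_mul_comm]
  rw [Matrix.trace_sub, Matrix.trace_add, Matrix.trace_sub, Matrix.trace_one, t1, t2, t3,
    Matrix.mul_add, Matrix.trace_add]
  simp only [Fintype.card_fin]
  push_cast
  ring
end

section
/- Let M ≥ 1 and let K ∈ ℝ^{M×M} be symmetric positive semidefinite. Consider the function f defined on the open set of matrices B ∈ ℝ^{M×M} for which I + K B is invertible and det(I + K B) > 0 by f(B) = (1/2)·log det(I + K B) − (1/2)·tr( K B (I + K B)⁻¹ ). Then at every symmetric positive definite B, f is Fréchet differentiable and its derivative in any direction V ∈ ℝ^{M×M} equals tr( M(B) · V ), where M(B) = (1/2)·(I + K B)⁻¹ K B K (I + B K)⁻¹. -/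
/-! With `A = 1 + K B`, invertible because `det A = det (B⁻¹ + K) * det B > 0`, the function is
`g (1 + K B)` for `g A = ½ log det A - ½ tr ((A - 1) A⁻¹)`, and near an invertible `A` the second
term is `½ tr (1 - A⁻¹)`. Jacobi's formula `d (log det A) = tr (A⁻¹ dA)` and
`d (A⁻¹) = -A⁻¹ dA A⁻¹` give `dg = ½ tr ((A⁻¹ - A⁻¹ A⁻¹) dA)`. Substituting `dA = K V` and using the
push-through identity `(1 + K B)⁻¹ K = K (1 + B K)⁻¹` turns this into `tr (M(B) V)`. -/

open Matrix

attribute [local instance] Matrix.normedAddCommGroup Matrix.normedSpace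

open Filter Topology

namespace Matrix

section Calculus

variable {𝕜 n : Type*} [NontriviallyNormedField 𝕜] [Fintype n] [DecidableEq n]

theorem differentiable_det : Differentiable 𝕜 (det : Matrix n n 𝕜 → 𝕜) := by
  simp_rw [funext det_apply']
  fun_prop

theorem hasDerivAt_det_one_add_smul (V : Matrix n n 𝕜) :
    HasDerivAt (fun t : 𝕜 => det (1 + t • V)) V.trace 0 := by
  set p := (det (1 + (Polynomial.X : Polynomial 𝕜) • V.map Polynomial.C)).divX.divX
  have h : HasDerivAt (fun t : 𝕜 => 1 + V.trace * t + p.eval t * t ^ 2) V.trace 0 := by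
    simpa using (((hasDerivAt_id' (0 : 𝕜)).const_mul V.trace).const_add 1).fun_add
      ((p.hasDerivAt 0).fun_mul ((hasDerivAt_id' (0 : 𝕜)).fun_pow 2))
  exact h.congr_of_eventuallyEq (.of_forall fun t => det_one_add_smul t V)

variable [CompleteSpace 𝕜]

noncomputable def traceMulCLM (C : Matrix n n 𝕜) : Matrix n n 𝕜 →L[𝕜] 𝕜 :=
  LinearMap.toContinuousLinearMap ((traceLinearMap n 𝕜 𝕜).comp (LinearMap.mulLeft 𝕜 C))

theorem hasFDerivAt_det_one : HasFDerivAt det (traceMulCLM (1 : Matrix n n 𝕜)) 1 := by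
  have hdet := (differentiable_det (𝕜 := 𝕜) (n := n) 1).hasFDerivAt
  convert hdet using 1
  ext V
  have hline : HasDerivAt (fun t : 𝕜 => det (1 + t • V)) (fderiv 𝕜 det 1 V) 0 := by
    have := hdet.comp_hasDerivAt_of_eq 0
      (((hasDerivAt_id' (0 : 𝕜)).smul_const V).const_add 1) (by simp)
    rwa [one_smul] at this
  show (1 * V).trace = _
  rw [Matrix.one_mul]
  exact (hasDerivAt_det_one_add_smul V).unique hline

theorem hasFDerivAt_det_of_isUnit {A : Matrix n n 𝕜} (hA : IsUnit A) :
    HasFDerivAt det (A.det • traceMulCLM A⁻¹) A := by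
  have hA' : IsUnit A.det := (isUnit_iff_isUnit_det A).mp hA
  have hone : HasFDerivAt det (traceMulCLM (1 : Matrix n n 𝕜)) (A⁻¹ * A) := by
    rw [nonsing_inv_mul A hA']
    exact hasFDerivAt_det_one
  have h := (hone.comp A
    (LinearMap.toContinuousLinearMap (LinearMap.mulLeft 𝕜 A⁻¹)).hasFDerivAt).const_mul A.det
  refine (h.congr_of_eventuallyEq (.of_forall fun X => ?_)).congr_fderiv ?_
  · simp [← det_mul, ← Matrix.mul_assoc, mul_nonsing_inv A hA']
  · ext V
    show A.det * (1 * (A⁻¹ * V)).trace = A.det * (A⁻¹ * V).trace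
    rw [Matrix.one_mul]

theorem hasFDerivAt_inv_of_isUnit {A : Matrix n n 𝕜} (hA : IsUnit A) :
    HasFDerivAt (fun X : Matrix n n 𝕜 => X⁻¹)
      (-LinearMap.toContinuousLinearMap (LinearMap.mulLeftRight 𝕜 (A⁻¹, A⁻¹))) A := by
  -- The `L∞` operator norm makes matrices a normed algebra without changing the topology, so the
  -- derivative of `Ring.inverse` in a complete normed algebra applies.
  let _ : NormedRing (Matrix n n 𝕜) := Matrix.linftyOpNormedRing
  let _ : NormedAlgebra 𝕜 (Matrix n n 𝕜) := Matrix.linftyOpNormedAlgebra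
  have : HasSummableGeomSeries (Matrix n n 𝕜) :=
    @instHasSummableGeomSeriesOfCompleteSpace _ _ (FiniteDimensional.complete 𝕜 _)
  obtain ⟨u, rfl⟩ := hA
  rw [show (fun X : Matrix n n 𝕜 => X⁻¹) = Ring.inverse from funext nonsing_inv_eq_ringInverse,
    ← coe_units_inv]
  exact hasFDerivAt_ringInverse u

theorem hasFDerivAt_trace_sub_one_mul_inv {A : Matrix n n 𝕜} (hA : IsUnit A) :
    HasFDerivAt (fun X : Matrix n n 𝕜 => ((X - 1) * X⁻¹).trace) (traceMulCLM (A⁻¹ * A⁻¹)) A := by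
  have h := (LinearMap.toContinuousLinearMap (traceLinearMap n 𝕜 𝕜)).hasFDerivAt.comp A
    ((hasFDerivAt_inv_of_isUnit hA).const_sub 1)
  have hunits : ∀ᶠ X in 𝓝 A, X.det ≠ 0 :=
    continuous_id.matrix_det.continuousAt.eventually_ne ((isUnit_iff_isUnit_det A).mp hA).ne_zero
  refine (h.congr_of_eventuallyEq ?_).congr_fderiv ?_
  · filter_upwards [hunits] with X hX
    simp [Matrix.sub_mul, mul_nonsing_inv X hX.isUnit]
  · ext V
    show (-(-(A⁻¹ * V * A⁻¹))).trace = (A⁻¹ * A⁻¹ * V).trace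
    rw [neg_neg, trace_mul_cycle]

end Calculus

theorem hasFDerivAt_log_det {n : Type*} [Fintype n] [DecidableEq n] {A : Matrix n n ℝ}
    (hA : A.det ≠ 0) : HasFDerivAt (fun X => Real.log X.det) (traceMulCLM A⁻¹) A := by
  have h := (Real.hasDerivAt_log hA).comp_hasFDerivAt A
    (hasFDerivAt_det_of_isUnit ((isUnit_iff_isUnit_det A).mpr hA.isUnit))
  refine h.congr_fderiv ?_
  ext V
  show A.det⁻¹ * (A.det * (A⁻¹ * V).trace) = (A⁻¹ * V).trace
  rw [inv_mul_cancel_left₀ hA]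

section Algebra

variable {R m n : Type*} [CommRing R] [Fintype m] [Fintype n] [DecidableEq m] [DecidableEq n]

theorem inv_one_add_mul_mul_comm (K : Matrix m n R) (B : Matrix n m R)
    (h : IsUnit (1 + K * B).det) : (1 + K * B)⁻¹ * K = K * (1 + B * K)⁻¹ := by
  have h' : IsUnit (1 + B * K).det := by rwa [← det_one_add_mul_comm]
  have hcomm : K * (1 + B * K) = (1 + K * B) * K := by
    rw [Matrix.mul_add, Matrix.add_mul, Matrix.mul_one, Matrix.one_mul, Matrix.mul_assoc]
  calc (1 + K * B)⁻¹ * K = (1 + K * B)⁻¹ * (K * (1 + B * K)) * (1 + B * K)⁻¹ := by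
        rw [Matrix.mul_assoc, Matrix.mul_assoc, mul_nonsing_inv _ h', Matrix.mul_one]
    _ = K * (1 + B * K)⁻¹ := by
        rw [hcomm, ← Matrix.mul_assoc, nonsing_inv_mul _ h, Matrix.one_mul]

theorem inv_one_add_mul_mul_mul_mul_inv_one_add_mul (K B : Matrix n n R)
    (h : IsUnit (1 + K * B).det) :
    (1 + K * B)⁻¹ * K * B * K * (1 + B * K)⁻¹ =
      ((1 + K * B)⁻¹ - (1 + K * B)⁻¹ * (1 + K * B)⁻¹) * K := by
  calc (1 + K * B)⁻¹ * K * B * K * (1 + B * K)⁻¹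
      = (1 + K * B)⁻¹ * (K * B) * (K * (1 + B * K)⁻¹) := by simp only [Matrix.mul_assoc]
    _ = (1 + K * B)⁻¹ * ((1 + K * B) - 1) * ((1 + K * B)⁻¹ * K) := by
        rw [add_sub_cancel_left, inv_one_add_mul_mul_comm K B h]
    _ = ((1 + K * B)⁻¹ - (1 + K * B)⁻¹ * (1 + K * B)⁻¹) * K := by
        rw [Matrix.mul_sub, nonsing_inv_mul _ h, Matrix.mul_one, Matrix.sub_mul, Matrix.one_mul,
          Matrix.sub_mul, Matrix.mul_assoc]

end Algebra

theorem det_one_add_mul_pos {n : Type*} [Fintype n] [DecidableEq n] {K B : Matrix n n ℝ}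
    (hK : K.PosSemidef) (hB : B.PosDef) : 0 < (1 + K * B).det := by
  have hfac : (B⁻¹ + K) * B = 1 + K * B := by
    rw [Matrix.add_mul, nonsing_inv_mul _ hB.det_pos.ne'.isUnit]
  rw [← hfac, det_mul]
  exact mul_pos (hB.inv.add_posSemidef hK).det_pos hB.det_pos

end Matrix

theorem stmt_9_general (M : ℕ) (K : Matrix (Fin M) (Fin M) ℝ)
    (hK : K.PosSemidef) (B : Matrix (Fin M) (Fin M) ℝ) (hB : B.PosDef) :
    HasFDerivAt
      (fun B : Matrix (Fin M) (Fin M) ℝ =>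
        (1 / 2 : ℝ) * Real.log (1 + K * B).det
          - (1 / 2 : ℝ) * (K * B * (1 + K * B)⁻¹).trace)
      (LinearMap.toContinuousLinearMap
        ((Matrix.traceLinearMap (Fin M) ℝ ℝ).comp
          (LinearMap.mulLeft ℝ
            ((1 / 2 : ℝ) • ((1 + K * B)⁻¹ * K * B * K * (1 + B * K)⁻¹))))) B := by
  have hdet : (1 + K * B).det ≠ 0 := (det_one_add_mul_pos hK hB).ne'
  have hunit : IsUnit (1 + K * B) := (isUnit_iff_isUnit_det _).mpr hdet.isUnit
  have hg := ((hasFDerivAt_log_det hdet).const_mul (1 / 2 : ℝ)).sub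
    ((hasFDerivAt_trace_sub_one_mul_inv hunit).const_mul (1 / 2 : ℝ))
  have hf := hg.comp B
    ((LinearMap.toContinuousLinearMap (LinearMap.mulLeft ℝ K)).hasFDerivAt.const_add 1)
  refine (hf.congr_of_eventuallyEq (.of_forall fun B' => ?_)).congr_fderiv ?_
  · simp
  · ext V
    show (1 / 2) * ((1 + K * B)⁻¹ * (K * V)).trace
        - (1 / 2) * ((1 + K * B)⁻¹ * (1 + K * B)⁻¹ * (K * V)).trace
      = ((1 / 2 : ℝ) • ((1 + K * B)⁻¹ * K * B * K * (1 + B * K)⁻¹) * V).trace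
    rw [inv_one_add_mul_mul_mul_mul_inv_one_add_mul K B hdet.isUnit, smul_mul, trace_smul,
      Matrix.sub_mul, Matrix.sub_mul, trace_sub, smul_eq_mul, mul_sub]
    simp only [Matrix.mul_assoc]

/-- Fréchet derivative of the `B`-dependent part of the KL
divergence, `f(B) = ½ log det (I + K B) − ½ tr (K B (I + K B)⁻¹)`, at every
symmetric positive definite `B`: the derivative in direction `V` is
`tr (M(B) V)` with `M(B) = ½ (I + K B)⁻¹ K B K (I + B K)⁻¹`. -/
theorem stmt_9 (M : ℕ) (hM : 1 ≤ M) (K : Matrix (Fin M) (Fin M) ℝ)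
    (hK : K.PosSemidef) (B : Matrix (Fin M) (Fin M) ℝ) (hB : B.PosDef) :
    HasFDerivAt
      (fun B : Matrix (Fin M) (Fin M) ℝ =>
        (1 / 2 : ℝ) * Real.log (1 + K * B).det
          - (1 / 2 : ℝ) * (K * B * (1 + K * B)⁻¹).trace)
      (LinearMap.toContinuousLinearMap
        ((Matrix.traceLinearMap (Fin M) ℝ ℝ).comp
          (LinearMap.mulLeft ℝ
            ((1 / 2 : ℝ) • ((1 + K * B)⁻¹ * K * B * K * (1 + B * K)⁻¹))))) B :=
  stmt_9_general M K hK B hB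
end

section
/- Let M ≥ 1 and let K, S̃ ∈ ℝ^{M×M} be invertible matrices such that S̃ − K is invertible, and set B = S̃⁻¹ − K⁻¹ (assumed invertible). Then B⁻¹ + K = −K (S̃ − K)⁻¹ K is invertible and −(1/2)·tr( K (B⁻¹ + K)⁻¹ ) = (1/2)·tr( S̃ K⁻¹ ) − M/2. -/
open Matrix

/-- conversion of the trace term of the KL divergence from the
direct decoupled parametrization to the hybrid parametrization. -/
theorem stmt_13 (M : ℕ) (hM : 1 ≤ M) (K S : Matrix (Fin M) (Fin M) ℝ)
    (hK : IsUnit K) (hS : IsUnit S) (hSK : IsUnit (S - K))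
    (hB : IsUnit (S⁻¹ - K⁻¹)) :
    (S⁻¹ - K⁻¹)⁻¹ + K = -(K * (S - K)⁻¹ * K) ∧
      IsUnit ((S⁻¹ - K⁻¹)⁻¹ + K) ∧
      -(1 / 2 : ℝ) * (K * ((S⁻¹ - K⁻¹)⁻¹ + K)⁻¹).trace =
        (1 / 2 : ℝ) * (S * K⁻¹).trace - (M : ℝ) / 2 := by
  have hKd : IsUnit K.det := (isUnit_iff_isUnit_det K).mp hK
  have hSd : IsUnit S.det := (isUnit_iff_isUnit_det S).mp hS
  have hSKd : IsUnit (S - K).det := (isUnit_iff_isUnit_det (S - K)).mp hSK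
  have hKS : (K - S)⁻¹ = -(S - K)⁻¹ := by
    have : (-(S - K))⁻¹ = -(S - K)⁻¹ := by
      apply inv_eq_left_inv
      rw [neg_mul_neg, nonsing_inv_mul _ hSKd]
    simpa [neg_sub] using this
  have hBeq : S⁻¹ - K⁻¹ = S⁻¹ * (K - S) * K⁻¹ := by
    rw [Matrix.mul_sub, Matrix.sub_mul, Matrix.mul_assoc, mul_nonsing_inv _ hKd,
      Matrix.mul_one, nonsing_inv_mul _ hSd, Matrix.one_mul]
  have hBinv : (S⁻¹ - K⁻¹)⁻¹ = K * (-(S - K)⁻¹) * S := by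
    rw [hBeq, Matrix.mul_inv_rev, Matrix.mul_inv_rev, hKS,
      nonsing_inv_nonsing_inv _ hKd, nonsing_inv_nonsing_inv _ hSd, Matrix.mul_assoc]
  have h1 : (S⁻¹ - K⁻¹)⁻¹ + K = -(K * (S - K)⁻¹ * K) := by
    have hKid : K = K * (S - K)⁻¹ * (S - K) := by
      rw [Matrix.mul_assoc, nonsing_inv_mul _ hSKd, Matrix.mul_one]
    calc (S⁻¹ - K⁻¹)⁻¹ + K = -(K * (S - K)⁻¹ * S) + K * (S - K)⁻¹ * (S - K) := by
          rw [hBinv, ← hKid]; noncomm_ring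
      _ = -(K * (S - K)⁻¹ * K) := by noncomm_ring
  have h2 : IsUnit ((S⁻¹ - K⁻¹)⁻¹ + K) := by
    rw [h1]
    exact ((hK.mul (Matrix.isUnit_nonsing_inv_iff.mpr hSK)).mul hK).neg
  refine ⟨h1, h2, ?_⟩
  have hinv : ((S⁻¹ - K⁻¹)⁻¹ + K)⁻¹ = -(K⁻¹ * (S - K) * K⁻¹) := by
    rw [h1]
    apply inv_eq_left_inv
    rw [neg_mul_neg]
    calc K⁻¹ * (S - K) * K⁻¹ * (K * (S - K)⁻¹ * K)
        = K⁻¹ * (S - K) * (K⁻¹ * K) * (S - K)⁻¹ * K := by noncomm_ring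
      _ = 1 := by
          rw [nonsing_inv_mul _ hKd, Matrix.mul_one, Matrix.mul_assoc,
            Matrix.mul_assoc, ← Matrix.mul_assoc (S - K), mul_nonsing_inv _ hSKd,
            Matrix.one_mul, nonsing_inv_mul _ hKd]
  have hKmul : K * ((S⁻¹ - K⁻¹)⁻¹ + K)⁻¹ = -(S * K⁻¹ - 1) := by
    rw [hinv, Matrix.mul_neg, ← Matrix.mul_assoc, ← Matrix.mul_assoc,
      mul_nonsing_inv _ hKd, Matrix.one_mul, Matrix.sub_mul,
      mul_nonsing_inv _ hKd]
  rw [hKmul, trace_neg, trace_sub, trace_one]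
  simp only [Fintype.card_fin]
  ring
end

section
/- Let d, M ≥ 1, let Ψ ∈ ℝ^{d×M} be a matrix with Gram matrix K = Ψᵀ Ψ invertible, and let S̃ ∈ ℝ^{M×M} be invertible with S̃ − K invertible. Set B = S̃⁻¹ − K⁻¹, and assume I + Ψ B Ψᵀ is invertible. Then (I + Ψ B Ψᵀ)⁻¹ = I + Ψ K⁻¹ (S̃ − K) K⁻¹ Ψᵀ. -/
open Matrix

/-- the hybrid parametrization of the variational covariance
operator coincides with the directly parametrized decoupled form. -/
theorem stmt_15 (d M : ℕ) (hd : 1 ≤ d) (hM : 1 ≤ M)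
    (Ψ : Matrix (Fin d) (Fin M) ℝ) (hK : IsUnit (Ψᵀ * Ψ))
    (S : Matrix (Fin M) (Fin M) ℝ) (hS : IsUnit S) (hSK : IsUnit (S - Ψᵀ * Ψ))
    (hI : IsUnit (1 + Ψ * (S⁻¹ - (Ψᵀ * Ψ)⁻¹) * Ψᵀ)) :
    (1 + Ψ * (S⁻¹ - (Ψᵀ * Ψ)⁻¹) * Ψᵀ)⁻¹ =
      1 + Ψ * (Ψᵀ * Ψ)⁻¹ * (S - Ψᵀ * Ψ) * (Ψᵀ * Ψ)⁻¹ * Ψᵀ := by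
  set K : Matrix (Fin M) (Fin M) ℝ := Ψᵀ * Ψ with hKdef
  have hKdet : IsUnit K.det := (Matrix.isUnit_iff_isUnit_det K).mp hK
  have hSdet : IsUnit S.det := (Matrix.isUnit_iff_isUnit_det S).mp hS
  have h1 : K⁻¹ * K = 1 := Matrix.nonsing_inv_mul K hKdet
  have h2 : K * K⁻¹ = 1 := Matrix.mul_nonsing_inv K hKdet
  have h3 : S⁻¹ * S = 1 := Matrix.nonsing_inv_mul S hSdet
  have h4 : S * S⁻¹ = 1 := Matrix.mul_nonsing_inv S hSdet
  apply Matrix.inv_eq_right_inv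
  have key : (S⁻¹ - K⁻¹) + K⁻¹ * (S - K) * K⁻¹ + (S⁻¹ - K⁻¹) * K * (K⁻¹ * (S - K) * K⁻¹) = 0 := by
    have e1 : (S⁻¹ - K⁻¹) * K * (K⁻¹ * (S - K) * K⁻¹) = (S⁻¹ - K⁻¹) * (S - K) * K⁻¹ := by
      rw [mul_assoc (S⁻¹ - K⁻¹) K, ← mul_assoc K, ← mul_assoc K, h2, one_mul, mul_assoc]
    rw [e1]
    simp only [Matrix.mul_sub, Matrix.sub_mul, mul_assoc, h1, h2, h3, h4, mul_one, one_mul]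
    abel
  have expand : (1 + Ψ * (S⁻¹ - K⁻¹) * Ψᵀ) * (1 + Ψ * (K⁻¹ * (S - K) * K⁻¹) * Ψᵀ)
      = 1 + Ψ * ((S⁻¹ - K⁻¹) + K⁻¹ * (S - K) * K⁻¹
          + (S⁻¹ - K⁻¹) * K * (K⁻¹ * (S - K) * K⁻¹)) * Ψᵀ := by
    have hmid : Ψ * (S⁻¹ - K⁻¹) * Ψᵀ * (Ψ * (K⁻¹ * (S - K) * K⁻¹) * Ψᵀ)
        = Ψ * ((S⁻¹ - K⁻¹) * K * (K⁻¹ * (S - K) * K⁻¹)) * Ψᵀ := by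
      rw [hKdef]
      simp only [Matrix.mul_assoc]
    rw [mul_add, add_mul, add_mul, one_mul, mul_one, hmid]
    rw [Matrix.mul_add, Matrix.mul_add, Matrix.add_mul, Matrix.add_mul]
    simp only [one_mul, mul_one]
    abel
  calc (1 + Ψ * (S⁻¹ - K⁻¹) * Ψᵀ) * (1 + Ψ * K⁻¹ * (S - K) * K⁻¹ * Ψᵀ)
      = (1 + Ψ * (S⁻¹ - K⁻¹) * Ψᵀ) * (1 + Ψ * (K⁻¹ * (S - K) * K⁻¹) * Ψᵀ) := by
        simp only [Matrix.mul_assoc]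
    _ = 1 := by rw [expand, key]; simp
end

section
/- Let h : ℝ → ℝ be a bounded continuous function, let v > 0 be a fixed variance, and define F(μ) = ∫ h(x) dN(μ, v)(x), where N(μ, v) is the Gaussian measure on ℝ with mean μ and variance v. Then for every μ ∈ ℝ, F is differentiable at μ with F′(μ) = ∫ h(x) · (x − μ)/v dN(μ, v)(x). -/
/-!
Write `∫ h dN(m, v) = ∫ h(x) φ_m(x) dx` with `φ_m` the Gaussian density and differentiate under
the integral sign: `∂φ_m(x)/∂m = ((x - m)/v) φ_m(x)`. For `|m - μ| ≤ 1` the elementary bound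
`(x - μ)² ≤ 2(x - m)² + 2(m - μ)²` dominates `φ_m` by a multiple of the density of `N(μ, 2v)`,
so the derivatives are dominated by `C (|x - μ| + 1) φ_{μ,2v}(x)`, integrable since Gaussians have
finite first moments.
-/

open MeasureTheory ProbabilityTheory Real
open scoped NNReal

lemma hasDerivAt_gaussianPDFReal_mean (v : ℝ≥0) (x m : ℝ) :
    HasDerivAt (fun m ↦ gaussianPDFReal m v x) ((x - m) / v * gaussianPDFReal m v x) m := by
  have hexponent : HasDerivAt (fun m ↦ -(x - m) ^ 2 / (2 * v)) ((x - m) / v) m :=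
    ((((hasDerivAt_id m).const_sub x).pow 2).neg.div_const (2 * (v : ℝ))).congr_deriv
      (by simp only [Nat.cast_ofNat, id_eq, Nat.add_one_sub_one, pow_one, mul_neg, mul_one,
            neg_neg]; ring)
  exact (hexponent.exp.const_mul (√(2 * π * v))⁻¹).congr_deriv
    (by simp only [gaussianPDFReal]; ring)

lemma gaussianPDFReal_le_mul_gaussianPDFReal_two_mul (m μ : ℝ) (v : ℝ≥0) (x : ℝ) :
    gaussianPDFReal m v x ≤ √2 * rexp ((m - μ) ^ 2 / (2 * v)) * gaussianPDFReal μ (2 * v) x := by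
  have hexponent :
      -(x - m) ^ 2 / (2 * v) ≤ (m - μ) ^ 2 / (2 * v) + -(x - μ) ^ 2 / (2 * (2 * v)) := by
    rw [show -(x - μ) ^ 2 / (2 * (2 * v)) = -((x - μ) ^ 2 / 2) / (2 * v) by ring, ← add_div]
    gcongr
    nlinarith [sq_nonneg (x - m - (m - μ))]
  have hnormalizer : (√(2 * π * v))⁻¹ = √2 * (√(2 * π * (2 * v)))⁻¹ := by
    rw [show 2 * π * (2 * v) = 2 * (2 * π * v) by ring, sqrt_mul zero_le_two, mul_inv,
      ← mul_assoc, mul_inv_cancel₀ (by positivity), one_mul]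
  simp only [gaussianPDFReal, NNReal.coe_mul, NNReal.coe_ofNat, hnormalizer]
  calc _ ≤ √2 * (√(2 * π * (2 * v)))⁻¹ *
        rexp ((m - μ) ^ 2 / (2 * v) + -(x - μ) ^ 2 / (2 * (2 * v))) := by gcongr
    _ = _ := by rw [exp_add]; ring

lemma abs_div_mul_gaussianPDFReal_le {m μ : ℝ} (hm : |m - μ| ≤ 1) (v : ℝ≥0) (x : ℝ) :
    |(x - m) / v| * gaussianPDFReal m v x
      ≤ √2 * rexp (1 / (2 * v)) / v * ((|x - μ| + 1) * gaussianPDFReal μ (2 * v) x) := by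
  have hscore : |(x - m) / v| ≤ (|x - μ| + 1) / v := by
    rw [abs_div, NNReal.abs_eq]
    gcongr
    calc |x - m| = |(x - μ) - (m - μ)| := by ring_nf
      _ ≤ |x - μ| + |m - μ| := abs_sub _ _
      _ ≤ |x - μ| + 1 := by gcongr
  have hdensity : gaussianPDFReal m v x ≤ √2 * rexp (1 / (2 * v)) * gaussianPDFReal μ (2 * v) x :=
    (gaussianPDFReal_le_mul_gaussianPDFReal_two_mul m μ v x).trans <|
      mul_le_mul_of_nonneg_right (by gcongr; exact (sq_le_one_iff_abs_le_one _).mpr hm)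
        (gaussianPDFReal_nonneg _ _ _)
  calc _ ≤ (|x - μ| + 1) / v * (√2 * rexp (1 / (2 * v)) * gaussianPDFReal μ (2 * v) x) :=
        mul_le_mul hscore hdensity (gaussianPDFReal_nonneg _ _ _) (by positivity)
    _ = _ := by ring

lemma integrable_mul_gaussianPDFReal {μ : ℝ} {v : ℝ≥0} {g : ℝ → ℝ}
    (hg : Integrable g (gaussianReal μ v)) :
    Integrable (fun x ↦ g x * gaussianPDFReal μ v x) := by
  rcases eq_or_ne v 0 with rfl | hv
  · simp
  rw [gaussianReal_of_var_ne_zero μ hv, integrable_withDensity_iff (measurable_gaussianPDF μ v)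
    (ae_of_all _ fun _ ↦ gaussianPDF_lt_top)] at hg
  simpa [toReal_gaussianPDF] using hg

lemma integrable_abs_sub_add_one_gaussianReal (μ : ℝ) (v : ℝ≥0) (c : ℝ) :
    Integrable (fun x ↦ |x - c| + 1) (gaussianReal μ v) :=
  (((memLp_id_gaussianReal 1).integrable le_rfl).sub (integrable_const c)).abs.add
    (integrable_const 1)

theorem hasDerivAt_integral_gaussianReal_mean {h : ℝ → ℝ} (hh : AEStronglyMeasurable h)
    {C : ℝ} (hC : ∀ x, |h x| ≤ C) {v : ℝ≥0} (hv : v ≠ 0) (μ : ℝ) :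
    HasDerivAt (fun m ↦ ∫ x, h x ∂gaussianReal m v)
      (∫ x, h x * ((x - μ) / v) ∂gaussianReal μ v) μ := by
  simp only [integral_gaussianReal_eq_integral_smul hv, smul_eq_mul]
  have hbound : ∀ m ∈ Metric.closedBall μ 1, ∀ x,
      ‖gaussianPDFReal m v x * (h x * ((x - m) / v))‖
        ≤ C * (√2 * rexp (1 / (2 * v)) / v * ((|x - μ| + 1) * gaussianPDFReal μ (2 * v) x)) := by
    intro m hm x
    calc _ = |h x| * (|(x - m) / v| * gaussianPDFReal m v x) := by
          rw [Real.norm_eq_abs, abs_mul, abs_mul, abs_of_nonneg (gaussianPDFReal_nonneg _ _ _)]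
          ring
      _ ≤ _ := mul_le_mul (hC x) (abs_div_mul_gaussianPDFReal_le hm v x)
          (mul_nonneg (abs_nonneg _) (gaussianPDFReal_nonneg _ _ _)) ((abs_nonneg _).trans (hC x))
  refine (hasDerivAt_integral_of_dominated_loc_of_deriv_le (Metric.closedBall_mem_nhds μ one_pos)
    ?_ ?_ ?_ (ae_of_all _ fun x m hm ↦ hbound m hm x) ?_ (ae_of_all _ fun x m _ ↦ ?_)).2
  · exact .of_forall fun m ↦ (measurable_gaussianPDFReal m v).aestronglyMeasurable.mul hh
  · exact (integrable_gaussianPDFReal μ v).mul_bdd hh (ae_of_all _ hC)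
  · fun_prop
  · exact (integrable_mul_gaussianPDFReal
      (integrable_abs_sub_add_one_gaussianReal μ _ μ)).const_mul _ |>.const_mul _
  · exact ((hasDerivAt_gaussianPDFReal_mean v x m).mul_const (h x)).congr_deriv (by ring)

/-- differentiability of `μ ↦ ∫ h dN(μ, v)` for bounded
continuous `h`, with derivative given by the score-function identity. -/
theorem stmt_16 (h : ℝ → ℝ) (hc : Continuous h) (hb : ∃ C, ∀ x, |h x| ≤ C)
    (v : NNReal) (hv : 0 < v) (μ : ℝ) :
    HasDerivAt (fun m : ℝ => ∫ x, h x ∂(gaussianReal m v))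
      (∫ x, h x * ((x - μ) / (v : ℝ)) ∂(gaussianReal μ v)) μ := by
  obtain ⟨C, hC⟩ := hb
  exact hasDerivAt_integral_gaussianReal_mean hc.aestronglyMeasurable hC hv.ne' μ
end

section
/- Let h : ℝ → ℝ be a bounded continuous function, let μ ∈ ℝ be fixed, and define G(v) = ∫ h(x) dN(μ, v)(x) for v > 0, where N(μ, v) is the Gaussian measure on ℝ with mean μ and variance v. Then for every v > 0, G is differentiable at v with G′(v) = ∫ h(x) · ( (x − μ)² − v ) / (2 v²) dN(μ, v)(x). -/
/-!
Write `∫ h dN(μ, w) = ∫ h φ_w` with `φ_w` the Gaussian density, whose variance derivative is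
`φ_w · ((x - μ)² - w) / (2 w²)`. For `w ∈ [v/2, 2v]` one has `φ_w ≤ 2 φ_{2v}`, so the
differentiated integrand is dominated by `C · φ_{2v}` times a quadratic polynomial in `x - μ`,
which is integrable (finite second moment), and we may differentiate under the integral sign.
-/

open MeasureTheory ProbabilityTheory Real Filter Topology
open scoped NNReal

namespace ProbabilityTheory

noncomputable def gaussianVarianceScore (μ v x : ℝ) : ℝ := ((x - μ) ^ 2 - v) / (2 * v ^ 2)

lemma hasDerivAt_gaussianPDFReal_variance (μ x : ℝ) {v : ℝ} (hv : 0 < v) :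
    HasDerivAt (fun w : ℝ => gaussianPDFReal μ w.toNNReal x)
      (gaussianPDFReal μ v.toNNReal x * gaussianVarianceScore μ v x) v := by
  have hpdf : (fun w : ℝ => gaussianPDFReal μ w.toNNReal x) =ᶠ[𝓝 v]
      fun w => (√(2 * π * w))⁻¹ * rexp (-(x - μ) ^ 2 / 2 * w⁻¹) := by
    filter_upwards [eventually_gt_nhds hv] with w hw
    rw [gaussianPDFReal, Real.coe_toNNReal _ hw.le]
    ring_nf
  have h2πv : 0 < 2 * π * v := by positivity
  have hsqrt : HasDerivAt (fun w : ℝ => √(2 * π * w)) (2 * π / (2 * √(2 * π * v))) v :=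
    ((hasDerivAt_id v).const_mul (2 * π)).sqrt (by simpa using h2πv.ne')
      |>.congr_deriv (by simp)
  have hexp := ((hasDerivAt_inv hv.ne').const_mul (-(x - μ) ^ 2 / 2)).exp
  refine ((hsqrt.inv (by positivity)).mul hexp).congr_of_eventuallyEq hpdf |>.congr_deriv ?_
  simp only [Pi.inv_apply]
  rw [gaussianPDFReal, Real.coe_toNNReal _ hv.le, gaussianVarianceScore]
  have hs : √(2 * π * v) ^ 2 = 2 * π * v := Real.sq_sqrt h2πv.le
  field_simp
  rw [hs]
  ring

lemma gaussianPDFReal_le_two_mul (μ x : ℝ) {v w : ℝ≥0} (hvw : v ≤ 2 * w)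
    (hwv : w ≤ 2 * v) :
    gaussianPDFReal μ w x ≤ 2 * gaussianPDFReal μ (2 * v) x := by
  rcases eq_zero_or_pos w with rfl | hw
  · simpa using gaussianPDFReal_nonneg μ (2 * v) x
  have hw' : (0 : ℝ) < w := hw
  have hvw' : (v : ℝ) ≤ 2 * w := by exact_mod_cast hvw
  have hwv' : (w : ℝ) ≤ 2 * v := by exact_mod_cast hwv
  have hv' : (0 : ℝ) < v := by linarith
  have hsqrt_pos : 0 < √(2 * π * w) := by positivity
  have hsqrt : √(2 * π * (2 * v)) ≤ √(2 * π * w) * 2 := by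
    rw [Real.sqrt_le_iff, mul_pow, Real.sq_sqrt (by positivity)]
    exact ⟨by positivity, by nlinarith [Real.pi_pos]⟩
  have hexp : -(x - μ) ^ 2 / (2 * w) ≤ -(x - μ) ^ 2 / (2 * (2 * v)) := by
    rw [neg_div, neg_div, neg_le_neg_iff]
    exact div_le_div_of_nonneg_left (sq_nonneg _) (by positivity) (by linarith)
  simp only [gaussianPDFReal, NNReal.coe_mul, NNReal.coe_ofNat]
  rw [← mul_assoc]
  gcongr
  rw [← div_eq_mul_inv, le_div_iff₀ (by positivity), inv_mul_le_iff₀ hsqrt_pos]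
  exact hsqrt

lemma abs_gaussianVarianceScore_le (μ x : ℝ) {v w : ℝ} (hv : 0 < v) (hvw : v ≤ 2 * w)
    (hwv : w ≤ 2 * v) :
    |gaussianVarianceScore μ w x| ≤ 2 * ((x - μ) ^ 2 + 2 * v) / v ^ 2 := by
  have hw : 0 < w := by linarith
  rw [gaussianVarianceScore, abs_div, abs_of_pos (by positivity : (0:ℝ) < 2 * w ^ 2),
    div_le_div_iff₀ (by positivity) (by positivity)]
  have habs : |(x - μ) ^ 2 - w| ≤ (x - μ) ^ 2 + 2 * v := by
    rw [abs_sub_le_iff]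
    constructor <;> nlinarith [sq_nonneg (x - μ)]
  nlinarith [mul_le_mul_of_nonneg_right habs (sq_nonneg v), sq_nonneg (x - μ),
    mul_le_mul_of_nonneg_left (show v ^ 2 ≤ 4 * w ^ 2 by nlinarith)
      (show (0:ℝ) ≤ (x - μ) ^ 2 + 2 * v by positivity)]

lemma abs_gaussianPDFReal_mul_gaussianVarianceScore_le (μ x : ℝ) {v w : ℝ} (hv : 0 < v)
    (hw : w ∈ Set.Icc (v / 2) (2 * v)) :
    |gaussianPDFReal μ w.toNNReal x * gaussianVarianceScore μ w x|
      ≤ 4 / v ^ 2 * (((x - μ) ^ 2 + 2 * v) * gaussianPDFReal μ (2 * v.toNNReal) x) := by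
  obtain ⟨hvw, hwv⟩ := hw
  have hvw' : v.toNNReal ≤ 2 * w.toNNReal := by
    simpa [Real.toNNReal_mul] using Real.toNNReal_le_toNNReal (show v ≤ 2 * w by linarith)
  have hwv' : w.toNNReal ≤ 2 * v.toNNReal := by
    simpa [Real.toNNReal_mul] using Real.toNNReal_le_toNNReal hwv
  have := gaussianPDFReal_nonneg μ (2 * v.toNNReal) x
  calc |gaussianPDFReal μ w.toNNReal x * gaussianVarianceScore μ w x|
      = gaussianPDFReal μ w.toNNReal x * |gaussianVarianceScore μ w x| := by
        rw [abs_mul, abs_of_nonneg (gaussianPDFReal_nonneg _ _ _)]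
    _ ≤ 2 * gaussianPDFReal μ (2 * v.toNNReal) x * (2 * ((x - μ) ^ 2 + 2 * v) / v ^ 2) := by
        gcongr
        · exact gaussianPDFReal_le_two_mul μ x hvw' hwv'
        · exact abs_gaussianVarianceScore_le μ x hv (by linarith) hwv
    _ = 4 / v ^ 2 * (((x - μ) ^ 2 + 2 * v) * gaussianPDFReal μ (2 * v.toNNReal) x) := by ring

lemma integrable_sq_add_const_mul_gaussianPDFReal (μ c : ℝ) (v : ℝ≥0) :
    Integrable fun x => ((x - μ) ^ 2 + c) * gaussianPDFReal μ v x := by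
  rcases eq_or_ne v 0 with rfl | hv
  · simp
  have hmom : Integrable (fun x => (x - μ) ^ 2 + c) (gaussianReal μ v) :=
    ((memLp_id_gaussianReal 2).sub (memLp_const μ)).integrable_sq.add (integrable_const c)
  rw [gaussianReal_of_var_ne_zero μ hv, integrable_withDensity_iff_integrable_smul'
    (measurable_gaussianPDF μ v) (ae_of_all _ fun _ => gaussianPDF_lt_top)] at hmom
  simpa [toReal_gaussianPDF, mul_comm] using hmom

theorem hasDerivAt_integral_gaussianReal_variance {h : ℝ → ℝ} (hm : AEStronglyMeasurable h)
    {C : ℝ} (hC : ∀ x, |h x| ≤ C) (μ : ℝ) {v : ℝ} (hv : 0 < v) :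
    HasDerivAt (fun w : ℝ => ∫ x, h x ∂gaussianReal μ w.toNNReal)
      (∫ x, h x * gaussianVarianceScore μ v x ∂gaussianReal μ v.toNNReal) v := by
  have hs : Set.Icc (v / 2) (2 * v) ∈ 𝓝 v := Icc_mem_nhds (by linarith) (by linarith)
  have hbound_int := ((integrable_sq_add_const_mul_gaussianPDFReal μ (2 * v)
    (2 * v.toNNReal)).const_mul (4 / v ^ 2)).mul_const C
  have hscore_meas : Measurable (gaussianVarianceScore μ v) := by
    unfold gaussianVarianceScore; fun_prop
  have key := hasDerivAt_integral_of_dominated_loc_of_deriv_le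
    (F := fun w x => gaussianPDFReal μ w.toNNReal x * h x) hs
    (Eventually.of_forall fun w => (measurable_gaussianPDFReal _ _).aestronglyMeasurable.mul hm)
    ((integrable_gaussianPDFReal μ _).mul_bdd hm (ae_of_all _ hC))
    (((measurable_gaussianPDFReal _ _).mul hscore_meas).aestronglyMeasurable.mul hm)
    (ae_of_all _ fun x w hw => by
      have hdom := abs_gaussianPDFReal_mul_gaussianVarianceScore_le μ x hv hw
      rw [norm_mul]
      exact mul_le_mul hdom (hC x) (norm_nonneg _) ((abs_nonneg _).trans hdom))
    hbound_int
    (ae_of_all _ fun x w hw =>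
      (hasDerivAt_gaussianPDFReal_variance μ x (by linarith [hw.1])).mul_const (h x))
  have hdensity : ∀ {w : ℝ}, 0 < w → ∀ f : ℝ → ℝ,
      ∫ x, f x ∂gaussianReal μ w.toNNReal = ∫ x, gaussianPDFReal μ w.toNNReal x * f x :=
    fun hw f => integral_gaussianReal_eq_integral_smul (Real.toNNReal_pos.mpr hw).ne'
  refine (key.2.congr_of_eventuallyEq ?_).congr_deriv ?_
  · filter_upwards [eventually_gt_nhds hv] with w hw using hdensity hw h
  · rw [hdensity hv]
    congr 1 with x
    ring

end ProbabilityTheory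

/-- differentiability of the variance map `v ↦ ∫ h dN(μ, v)`
for bounded continuous `h`, with derivative given by the score-function
identity with respect to the variance. -/
theorem stmt_17 (h : ℝ → ℝ) (hc : Continuous h) (hb : ∃ C, ∀ x, |h x| ≤ C)
    (μ : ℝ) (v : ℝ) (hv : 0 < v) :
    HasDerivAt (fun v : ℝ => ∫ x, h x ∂(gaussianReal μ (Real.toNNReal v)))
      (∫ x, h x * (((x - μ) ^ 2 - v) / (2 * v ^ 2))
        ∂(gaussianReal μ (Real.toNNReal v))) v := by
  obtain ⟨C, hC⟩ := hb
  exact hasDerivAt_integral_gaussianReal_variance hc.aestronglyMeasurable hC μ hv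
end
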